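/- In the Uvarov setting, the vector of jet-pairings of the perturbed polynomial satisfies the linear system ⟨P̂^{[1]}_n(x), (β)_x⟩ · (I_{Np} + ⟨𝒥^{[0,1]}_{K_{n−1}}(x), (β)_x⟩) = ⟨P^{[1]}_n(x), (β)_x⟩. -/

import Mathlib

open Polynomial Matrix Finset

namespace Paper

abbrev Mat (p : ℕ) := Matrix (Fin p) (Fin p) ℂ
abbrev MatPoly (p : ℕ) := Matrix (Fin p) (Fin p) (Polynomial ℂ)

variable {p : ℕ}

/-- Embed a constant matrix as a matrix polynomial. -/
noncomputable def cm (A : Mat p) : MatPoly p := A.map Polynomial.C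

/-- The monomial `I_p x^k` as a matrix polynomial. -/
noncomputable def monoM (p k : ℕ) : MatPoly p := Matrix.diagonal (fun _ => (Polynomial.X : Polynomial ℂ) ^ k)

/-- The `k`-th matrix coefficient of a matrix polynomial. -/
noncomputable def coeffM (P : MatPoly p) (k : ℕ) : Mat p := Matrix.of fun i j => (P i j).coeff k

/-- Entrywise derivative of a matrix polynomial. -/
noncomputable def dM : MatPoly p → MatPoly p := fun P => Matrix.of fun i j => Polynomial.derivative (P i j)

/-- Evaluation of a matrix polynomial at a scalar point. -/
noncomputable def evM (z : ℂ) (P : MatPoly p) : Mat p := Matrix.of fun i j => (P i j).eval z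

/-- `P` is monic of exact degree `n`. -/
def MonicDeg (P : MatPoly p) (n : ℕ) : Prop :=
  coeffM P n = 1 ∧ ∀ k, n < k → coeffM P k = 0

/-- Sesquilinear form on matrix polynomials: left `ℂ^{p×p}`-linear in the first slot,
`⟨P, AQ + R⟩ = ⟨P,Q⟩Aᵀ + ⟨P,R⟩` in the second slot. -/
def IsSesq (S : MatPoly p → MatPoly p → Mat p) : Prop :=
  (∀ (A : Mat p) (P Q R : MatPoly p), S (cm A * P + Q) R = A * S P R + S Q R) ∧
  (∀ (A : Mat p) (P Q R : MatPoly p), S P (cm A * Q + R) = S P Q * Aᵀ + S P R)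

end Paper

namespace Paper

variable {p : ℕ}

/-- Jet index set: pairs (point j, derivative order m < κ j). -/
abbrev JIdx (q : ℕ) (κ : Fin q → ℕ) := Σ j : Fin q, Fin (κ j)

/-- The `a`-th `p×p` block (a jet index) of the column jet `𝒥^{[0,1]}_{K_{n-1}}(x)`:
the `y`-jet of the Christoffel–Darboux kernel `K_{n-1}(x,y)` at the point `xpt a.1`,
derivative order `a.2`, divided by `(a.2)!`; a matrix polynomial in `x`. -/
noncomputable def KBlock {q : ℕ} {κ : Fin q → ℕ} (P1 P2 : ℕ → MatPoly p) (H : ℕ → Mat p)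
    (xpt : Fin q → ℂ) (n : ℕ) (a : JIdx q κ) : MatPoly p :=
  ∑ k ∈ Finset.range n,
    cm ((((Nat.factorial (a.2 : ℕ) : ℂ))⁻¹ • evM (xpt a.1) (dM^[(a.2 : ℕ)] (P2 k)))ᵀ * (H k)⁻¹)
      * P1 k

/-- The `Np×Np` matrix of pairings `⟨𝒥^{[0,1]}_{K_{n-1}}(x), (β)_x⟩`. -/
noncomputable def PairM {q : ℕ} {κ : Fin q → ℕ} (β : JIdx q κ → MatPoly p → Mat p)
    (P1 P2 : ℕ → MatPoly p) (H : ℕ → Mat p) (xpt : Fin q → ℂ) (n : ℕ) :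
    Matrix (JIdx q κ × Fin p) (JIdx q κ × Fin p) ℂ :=
  Matrix.of fun a b => (β b.1 (KBlock P1 P2 H xpt n a.1)) a.2 b.2

/-- The `p×Np` row of pairings `⟨P(x), (β)_x⟩`. -/
noncomputable def RowB {q : ℕ} {κ : Fin q → ℕ} (β : JIdx q κ → MatPoly p → Mat p)
    (P : MatPoly p) : Matrix (Fin p) (JIdx q κ × Fin p) ℂ :=
  Matrix.of fun s b => (β b.1 P) s b.2

/-- The `p×Np` spectral jet `𝒥_f` of a matrix polynomial at the points `xpt j`,
with multiplicities `κ j`. -/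
noncomputable def JetRow {q : ℕ} (κ : Fin q → ℕ) (xpt : Fin q → ℂ) (f : MatPoly p) :
    Matrix (Fin p) (JIdx q κ × Fin p) ℂ :=
  Matrix.of fun s a =>
    ((Nat.factorial (a.1.2 : ℕ) : ℂ)⁻¹ • evM (xpt a.1.1) (dM^[(a.1.2 : ℕ)] f)) s a.2

/-- The `Np×p` jet `𝒥^{[0,1]}_{K_{n-1}}(x)` as a matrix with polynomial entries. -/
noncomputable def Jet01 {q : ℕ} (κ : Fin q → ℕ) (P1 P2 : ℕ → MatPoly p) (H : ℕ → Mat p)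
    (xpt : Fin q → ℂ) (n : ℕ) : Matrix (JIdx q κ × Fin p) (Fin p) (Polynomial ℂ) :=
  Matrix.of fun a t => (KBlock (κ := κ) P1 P2 H xpt n a.1) a.2 t

end Paper

/-! Write `P̂_n − P_n = Σ_{k<n} A_k P_k`, possible since both are monic of degree `n`. Pairing
with `P₂_l` (`l < n`) gives `A_l H_l = u(P̂_n, P₂_l)`, while `û(P̂_n, P₂_l) = 0` because `P₂_l`
lies in the span of the `P̂₂_m`, `m ≤ l`. As `û = u + v`, this yields
`A_l = −v(P̂_n, P₂_l) H_l⁻¹`, i.e. the connection formula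
`P̂_n(z) = P_n(z) − ⟨P̂_n(x), (K_{n−1}(z,y))ᵀ⟩_v`. Applying each functional `β_b` to it and
collecting the results into a row gives the linear system. -/

namespace Paper

section MatrixPolynomials

variable {p : ℕ}

lemma cm_one : cm (1 : Mat p) = 1 :=
  map_one (Polynomial.C.mapMatrix : Mat p →+* MatPoly p)

lemma cm_mul (A B : Mat p) : cm (A * B) = cm A * cm B :=
  map_mul (Polynomial.C.mapMatrix : Mat p →+* MatPoly p) A B

lemma cm_neg (A : Mat p) : cm (-A) = -cm A :=
  map_neg (Polynomial.C.mapMatrix : Mat p →+* MatPoly p) A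

lemma cm_sum {ι : Type*} (s : Finset ι) (A : ι → Mat p) :
    cm (∑ i ∈ s, A i) = ∑ i ∈ s, cm (A i) :=
  map_sum (Polynomial.C.mapMatrix : Mat p →+* MatPoly p) A s

lemma coeffM_sub (P Q : MatPoly p) (k : ℕ) : coeffM (P - Q) k = coeffM P k - coeffM Q k := by
  ext i j
  simp [coeffM]

lemma coeffM_cm_mul (A : Mat p) (P : MatPoly p) (k : ℕ) :
    coeffM (cm A * P) k = A * coeffM P k := by
  ext i j
  simp [coeffM, cm, Matrix.mul_apply, Polynomial.coeff_C_mul]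

lemma eq_zero_of_coeffM_eq_zero {P : MatPoly p} (h : ∀ k, coeffM P k = 0) : P = 0 := by
  ext i j k
  simpa [coeffM] using congrFun (congrFun (h k) i) j

lemma evM_iterate_dM_transpose (z : ℂ) (m : ℕ) (Q : MatPoly p) :
    evM z (dM^[m] Qᵀ) = (evM z (dM^[m] Q))ᵀ := by
  have hcomm : Function.Commute (dM : MatPoly p → MatPoly p) Matrix.transpose := fun _ => rfl
  rw [(hcomm.iterate_left m).eq]
  rfl

end MatrixPolynomials

section MonicBasis

variable {p : ℕ}

lemma MonicDeg.coeffM_sub_eq_zero {P Q : MatPoly p} {n : ℕ} (hP : MonicDeg P n)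
    (hQ : MonicDeg Q n) {k : ℕ} (hk : n ≤ k) : coeffM (P - Q) k = 0 := by
  rw [coeffM_sub]
  rcases hk.eq_or_lt with rfl | hlt
  · rw [hP.1, hQ.1, sub_self]
  · rw [hP.2 k hlt, hQ.2 k hlt, sub_self]

lemma exists_eq_sum_cm_mul_of_monicDeg {B : ℕ → MatPoly p} (hB : ∀ k, MonicDeg (B k) k) :
    ∀ (n : ℕ) (D : MatPoly p), (∀ k, n ≤ k → coeffM D k = 0) →
      ∃ A : ℕ → Mat p, D = ∑ k ∈ Finset.range n, cm (A k) * B k := by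
  intro n
  induction n with
  | zero =>
    intro D hD
    exact ⟨0, by simpa using eq_zero_of_coeffM_eq_zero fun k => hD k k.zero_le⟩
  | succ n ih =>
    intro D hD
    have hlower : ∀ k, n ≤ k → coeffM (D - cm (coeffM D n) * B n) k = 0 := by
      intro k hk
      rw [coeffM_sub, coeffM_cm_mul]
      rcases hk.eq_or_lt with rfl | hlt
      · rw [(hB n).1, mul_one, sub_self]
      · rw [hD k hlt, (hB n).2 k hlt, mul_zero, sub_self]
    obtain ⟨A, hA⟩ := ih _ hlower
    refine ⟨Function.update A n (coeffM D n), ?_⟩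
    rw [Finset.sum_range_succ, Function.update_self,
      Finset.sum_congr rfl fun k hk => by
        rw [Function.update_of_ne (Finset.mem_range.mp hk).ne],
      ← hA, sub_add_cancel]

end MonicBasis

section LeftLinear

variable {p : ℕ}

/-- The common shape of `β a`, of the first slot of an `IsSesq` form and of its transposed
second slot. -/
def IsLeftLinear (f : MatPoly p → Mat p) : Prop :=
  ∀ (A : Mat p) (P Q : MatPoly p), f (cm A * P + Q) = A * f P + f Q

namespace IsLeftLinear

variable {f : MatPoly p → Mat p}

lemma map_zero (hf : IsLeftLinear f) : f 0 = 0 := by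
  simpa [cm_one] using hf 1 0 0

lemma map_add (hf : IsLeftLinear f) (P Q : MatPoly p) : f (P + Q) = f P + f Q := by
  simpa [cm_one] using hf 1 P Q

lemma map_cm_mul (hf : IsLeftLinear f) (A : Mat p) (P : MatPoly p) : f (cm A * P) = A * f P := by
  simpa [hf.map_zero] using hf A P 0

lemma map_sum_cm_mul (hf : IsLeftLinear f) {ι : Type*} (s : Finset ι) (A : ι → Mat p)
    (g : ι → MatPoly p) :
    f (∑ i ∈ s, cm (A i) * g i) = ∑ i ∈ s, A i * f (g i) := by
  rw [← AddMonoidHom.mk'_apply f hf.map_add, map_sum]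
  exact Finset.sum_congr rfl fun i _ => hf.map_cm_mul (A i) (g i)

end IsLeftLinear

end LeftLinear

section Sesquilinear

variable {p : ℕ} {S : MatPoly p → MatPoly p → Mat p}

lemma IsSesq.isLeftLinear_left (hS : IsSesq S) (R : MatPoly p) : IsLeftLinear (S · R) :=
  fun A P Q => hS.1 A P Q R

lemma IsSesq.isLeftLinear_transpose_right (hS : IsSesq S) (P : MatPoly p) :
    IsLeftLinear fun Q => (S P Q)ᵀ := by
  intro A Q R
  dsimp only
  rw [hS.2, Matrix.transpose_add, Matrix.transpose_mul, Matrix.transpose_transpose]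

lemma IsSesq.sum_cm_mul_right (hS : IsSesq S) {ι : Type*} (s : Finset ι) (A : ι → Mat p)
    (g : ι → MatPoly p) (P : MatPoly p) :
    S P (∑ i ∈ s, cm (A i) * g i) = ∑ i ∈ s, S P (g i) * (A i)ᵀ := by
  apply Matrix.transpose_injective
  rw [(hS.isLeftLinear_transpose_right P).map_sum_cm_mul, Matrix.transpose_sum]
  simp only [Matrix.transpose_mul, Matrix.transpose_transpose]

variable {Q1 Q2 : ℕ → MatPoly p} {G : ℕ → Mat p}

lemma IsSesq.apply_eq_zero_of_biorthogonal (hS : IsSesq S) (hQ2 : ∀ k, MonicDeg (Q2 k) k)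
    (hbio : ∀ k l, S (Q1 k) (Q2 l) = if k = l then G k else 0) {n l : ℕ} (hl : l < n)
    {D : MatPoly p} (hD : ∀ k, l < k → coeffM D k = 0) : S (Q1 n) D = 0 := by
  obtain ⟨A, rfl⟩ := exists_eq_sum_cm_mul_of_monicDeg hQ2 (l + 1) D hD
  rw [hS.sum_cm_mul_right]
  refine Finset.sum_eq_zero fun k hk => ?_
  rw [hbio, if_neg (by have := Finset.mem_range.mp hk; omega), zero_mul]

lemma IsSesq.apply_add_sum_cm_mul_of_biorthogonal (hS : IsSesq S)
    (hbio : ∀ k l, S (Q1 k) (Q2 l) = if k = l then G k else 0) {n l : ℕ} (hl : l < n)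
    (A : ℕ → Mat p) :
    S (Q1 n + ∑ k ∈ Finset.range n, cm (A k) * Q1 k) (Q2 l) = A l * G l := by
  rw [(hS.isLeftLinear_left _).map_add, (hS.isLeftLinear_left _).map_sum_cm_mul, hbio,
    if_neg hl.ne', zero_add, Finset.sum_eq_single_of_mem l (Finset.mem_range.mpr hl)
      fun k _ hkl => by rw [hbio, if_neg hkl, mul_zero], hbio, if_pos rfl]

end Sesquilinear

section Uvarov

variable {p q : ℕ} {κ : Fin q → ℕ}

/-- The discrete part `⟨P, Q⟩_v` of the Uvarov perturbation `û = u + v`. -/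
noncomputable def vForm (β : JIdx q κ → MatPoly p → Mat p) (xpt : Fin q → ℂ)
    (P Q : MatPoly p) : Mat p :=
  ∑ a : JIdx q κ,
    ((a.2 : ℕ).factorial : ℂ)⁻¹ • (β a P * evM (xpt a.1) (dM^[(a.2 : ℕ)] Qᵀ))

/-- `⟨R(x), (K_{n-1}(z,y))ᵀ⟩_v`, a matrix polynomial in `z`. -/
noncomputable def kernelPairing (β : JIdx q κ → MatPoly p → Mat p) (P1 P2 : ℕ → MatPoly p)
    (H : ℕ → Mat p) (xpt : Fin q → ℂ) (n : ℕ) (R : MatPoly p) : MatPoly p :=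
  ∑ a : JIdx q κ, cm (β a R) * KBlock P1 P2 H xpt n a

variable {β : JIdx q κ → MatPoly p → Mat p} {P1 P2 : ℕ → MatPoly p} {H : ℕ → Mat p}
  {xpt : Fin q → ℂ} {n : ℕ}

lemma kernelPairing_eq_sum (R : MatPoly p) :
    kernelPairing β P1 P2 H xpt n R
      = ∑ k ∈ Finset.range n, cm (vForm β xpt R (P2 k) * (H k)⁻¹) * P1 k := by
  simp only [kernelPairing, KBlock, vForm, Finset.mul_sum, ← mul_assoc, ← cm_mul]
  rw [Finset.sum_comm]
  refine Finset.sum_congr rfl fun k _ => ?_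
  rw [← Finset.sum_mul, ← cm_sum, Finset.sum_mul]
  simp only [evM_iterate_dM_transpose, Matrix.transpose_smul, mul_smul_comm, smul_mul_assoc,
    mul_assoc]

lemma RowB_add (hβ : ∀ a, IsLeftLinear (β a)) (P Q : MatPoly p) :
    RowB β (P + Q) = RowB β P + RowB β Q := by
  ext s b
  simp [RowB, (hβ b.1).map_add]

lemma RowB_mul_PairM (hβ : ∀ a, IsLeftLinear (β a)) (R : MatPoly p) :
    RowB β R * PairM β P1 P2 H xpt n = RowB β (kernelPairing β P1 P2 H xpt n R) := by
  ext s ⟨b, t⟩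
  simp only [Matrix.mul_apply, Fintype.sum_prod_type, RowB, PairM, kernelPairing,
    Matrix.of_apply, (hβ b).map_sum_cm_mul, Matrix.sum_apply]

lemma eq_sub_kernelPairing_of_uvarov {u uh : MatPoly p → MatPoly p → Mat p} (hu : IsSesq u)
    (huh : IsSesq uh) (hv : ∀ P Q, uh P Q = u P Q + vForm β xpt P Q)
    {hP1 hP2 : ℕ → MatPoly p} {Hh : ℕ → Mat p}
    (hmon1 : ∀ k, MonicDeg (P1 k) k) (hmon2 : ∀ k, MonicDeg (P2 k) k)
    (hmon1h : MonicDeg (hP1 n) n) (hmon2h : ∀ k, MonicDeg (hP2 k) k) (hH : ∀ k, IsUnit (H k))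
    (hbio : ∀ k l, u (P1 k) (P2 l) = if k = l then H k else 0)
    (hbioh : ∀ k l, uh (hP1 k) (hP2 l) = if k = l then Hh k else 0) :
    hP1 n = P1 n - kernelPairing β P1 P2 H xpt n (hP1 n) := by
  obtain ⟨A, hA⟩ := exists_eq_sum_cm_mul_of_monicDeg hmon1 n (hP1 n - P1 n)
    fun k hk => hmon1h.coeffM_sub_eq_zero (hmon1 n) hk
  have hexp : hP1 n = P1 n + ∑ k ∈ Finset.range n, cm (A k) * P1 k := by
    rw [← hA, add_sub_cancel]
  have hcoeff : ∀ l < n, A l = -vForm β xpt (hP1 n) (P2 l) * (H l)⁻¹ := by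
    intro l hl
    have horth : uh (hP1 n) (P2 l) = 0 :=
      huh.apply_eq_zero_of_biorthogonal hmon2h hbioh hl (hmon2 l).2
    have hu_apply : u (hP1 n) (P2 l) = A l * H l := by
      rw [hexp]
      exact hu.apply_add_sum_cm_mul_of_biorthogonal hbio hl A
    rw [hv, hu_apply, add_eq_zero_iff_eq_neg] at horth
    rw [← horth, Matrix.mul_nonsing_inv_cancel_right _ _
      ((Matrix.isUnit_iff_isUnit_det _).mp (hH l))]
  rw [kernelPairing_eq_sum, sub_eq_add_neg, ← Finset.sum_neg_distrib]
  conv_lhs => rw [hexp]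
  refine congrArg _ (Finset.sum_congr rfl fun l hl => ?_)
  rw [hcoeff l (Finset.mem_range.mp hl), neg_mul, cm_neg, neg_mul]

end Uvarov

end Paper

open Paper in
theorem statement8_general (p q : ℕ) (κ : Fin q → ℕ) (xpt : Fin q → ℂ)
    (u uh : MatPoly p → MatPoly p → Mat p) (hu : IsSesq u) (huh : IsSesq uh)
    (β : JIdx q κ → MatPoly p → Mat p)
    (hβ : ∀ a (A : Mat p) (P Q : MatPoly p), β a (cm A * P + Q) = A * β a P + β a Q)
    (hv : ∀ P Q : MatPoly p, uh P Q = u P Q + ∑ a : JIdx q κ,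
        (Nat.factorial (a.2 : ℕ) : ℂ)⁻¹ • (β a P * evM (xpt a.1) (dM^[(a.2 : ℕ)] Qᵀ)))
    (P1 P2 hP1 hP2 : ℕ → MatPoly p) (H Hh : ℕ → Mat p)
    (hmon1 : ∀ k, MonicDeg (P1 k) k) (hmon2 : ∀ k, MonicDeg (P2 k) k)
    (hmon1h : ∀ k, MonicDeg (hP1 k) k) (hmon2h : ∀ k, MonicDeg (hP2 k) k)
    (hH : ∀ k, IsUnit (H k))
    (hbio : ∀ k l, u (P1 k) (P2 l) = if k = l then H k else 0)
    (hbioh : ∀ k l, uh (hP1 k) (hP2 l) = if k = l then Hh k else 0)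
    (n : ℕ)
    :
    RowB β (hP1 n) * (1 + PairM β P1 P2 H xpt n) = RowB β (P1 n) := by
  have hconn : hP1 n = P1 n - kernelPairing β P1 P2 H xpt n (hP1 n) :=
    eq_sub_kernelPairing_of_uvarov hu huh hv hmon1 hmon2 (hmon1h n) hmon2h hH hbio hbioh
  rw [Matrix.mul_add, Matrix.mul_one, RowB_mul_PairM hβ, ← RowB_add hβ,
    eq_sub_iff_add_eq.mp hconn]

open Paper in
/-- In the Uvarov setting, the row of pairings of the perturbed polynomial
satisfies `⟨P̂^{[1]}_n(x),(β)_x⟩ · (I_{Np} + ⟨𝒥^{[0,1]}_{K_{n−1}}(x),(β)_x⟩) = ⟨P^{[1]}_n(x),(β)_x⟩`. -/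
theorem statement8 (p q : ℕ) (κ : Fin q → ℕ) (hκ : ∀ j, 0 < κ j) (xpt : Fin q → ℂ)
    (hx : Function.Injective xpt)
    (u uh : MatPoly p → MatPoly p → Mat p) (hu : IsSesq u) (huh : IsSesq uh)
    (β : JIdx q κ → MatPoly p → Mat p)
    (hβ : ∀ a (A : Mat p) (P Q : MatPoly p), β a (cm A * P + Q) = A * β a P + β a Q)
    (hv : ∀ P Q : MatPoly p, uh P Q = u P Q + ∑ a : JIdx q κ,
        (Nat.factorial (a.2 : ℕ) : ℂ)⁻¹ • (β a P * evM (xpt a.1) (dM^[(a.2 : ℕ)] Qᵀ)))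
    (P1 P2 hP1 hP2 : ℕ → MatPoly p) (H Hh : ℕ → Mat p)
    (hmon1 : ∀ k, MonicDeg (P1 k) k) (hmon2 : ∀ k, MonicDeg (P2 k) k)
    (hmon1h : ∀ k, MonicDeg (hP1 k) k) (hmon2h : ∀ k, MonicDeg (hP2 k) k)
    (hH : ∀ k, IsUnit (H k)) (hHh : ∀ k, IsUnit (Hh k))
    (hbio : ∀ k l, u (P1 k) (P2 l) = if k = l then H k else 0)
    (hbioh : ∀ k l, uh (hP1 k) (hP2 l) = if k = l then Hh k else 0)
    (n : ℕ)
    :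
    RowB β (hP1 n) * (1 + PairM β P1 P2 H xpt n) = RowB β (P1 n) :=
  statement8_general p q κ xpt u uh hu huh β hβ hv P1 P2 hP1 hP2 H Hh hmon1 hmon2 hmon1h hmon2h hH
    hbio hbioh n
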